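/- (Gyöngy–Krylov criterion.) Let (E,ρ) be a Polish space equipped with its Borel σ-algebra, and let (Z_n)_{n∈ℕ} be a sequence of E-valued random elements defined on a common probability space (Ω,ℱ,P). Assume that for every pair of strictly increasing sequences of indices (l_k) and (m_k) there exists a further common subsequence (k_r) such that the laws of the pairs (Z_{l_{k_r}}, Z_{m_{k_r}}) converge weakly, as probability measures on E × E, to a probability measure μ satisfying μ({(u,v) ∈ E × E : u = v}) = 1. Then there exists an E-valued random element Z on (Ω,ℱ,P) such that Z_n converges to Z in probability, i.e. P(ρ(Z_n, Z) > δ) → 0 as n → ∞ for every δ > 0. -/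

import Mathlib

/-!
The hypothesis forces `Z` to be Cauchy in probability. Otherwise there are `δ, ε > 0` and
indices `p_N, q_N ≥ N` with `P(ρ(Z_{p_N}, Z_{q_N}) ≥ δ) > ε`; along the subsequence provided by the
hypothesis, the integrals of the test function `min (ρ(u, v) / δ) 1` stay `≥ ε` by Markov's
inequality, yet they tend to its integral against a law carried by the diagonal, which is `0`.
A sequence that is Cauchy in probability has a subsequence with
`P(ρ(Z_{n_j}, Z_{n_{j+1}}) ≥ 2⁻ʲ) ≤ 2⁻ʲ`, which converges almost surely by Borel–Cantelli and
completeness; its limit is then the limit in probability of the whole sequence.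
-/

open Filter Topology MeasureTheory
open scoped ENNReal BoundedContinuousFunction

section CauchyInMeasure

variable {Ω E : Type*} [MeasurableSpace Ω] [PseudoMetricSpace E]

def CauchyInMeasure (P : Measure Ω) (Z : ℕ → Ω → E) : Prop :=
  ∀ δ : ℝ, 0 < δ → ∀ ε : ℝ≥0∞, 0 < ε →
    ∃ N, ∀ p ≥ N, ∀ q ≥ N, P {ω | δ ≤ dist (Z p ω) (Z q ω)} ≤ ε

lemma measure_le_dist_le_add (P : Measure Ω) (X Y W : Ω → E) (δ : ℝ) :
    P {ω | δ ≤ dist (X ω) (Y ω)} ≤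
      P {ω | δ / 2 ≤ dist (X ω) (W ω)} + P {ω | δ / 2 ≤ dist (W ω) (Y ω)} := by
  refine (measure_mono fun ω hω => ?_).trans (measure_union_le _ _)
  by_contra hω'
  simp only [Set.mem_union, Set.mem_ofPred_eq, not_or, not_le] at hω hω'
  linarith [dist_triangle (X ω) (W ω) (Y ω)]

variable {P : Measure Ω} {Z : ℕ → Ω → E}

lemma CauchyInMeasure.exists_strictMono_measure_dist_succ_le (hZ : CauchyInMeasure P Z) :
    ∃ n : ℕ → ℕ, StrictMono n ∧
      ∀ j, P {ω | (2⁻¹ : ℝ) ^ j ≤ dist (Z (n j) ω) (Z (n (j + 1)) ω)} ≤ 2⁻¹ ^ j := by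
  have hbound (j : ℕ) : ∃ N, ∀ p ≥ N, ∀ q ≥ p,
      P {ω | (2⁻¹ : ℝ) ^ j ≤ dist (Z p ω) (Z q ω)} ≤ 2⁻¹ ^ j := by
    obtain ⟨N, hN⟩ := hZ ((2⁻¹ : ℝ) ^ j) (by positivity) (2⁻¹ ^ j) (ENNReal.pow_pos (by norm_num) j)
    exact ⟨N, fun p hp q hq => hN p hp q (hp.trans hq)⟩
  obtain ⟨n, hn, hn_bound⟩ := extraction_forall_of_eventually' hbound
  exact ⟨n, hn, fun j => hn_bound j _ (hn (Nat.lt_succ_self j)).le⟩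

lemma ae_cauchySeq_of_measure_dist_succ_le {X : ℕ → Ω → E}
    (hX : ∀ j, P {ω | (2⁻¹ : ℝ) ^ j ≤ dist (X j ω) (X (j + 1) ω)} ≤ 2⁻¹ ^ j) :
    ∀ᵐ ω ∂P, CauchySeq fun j => X j ω := by
  have hsum : ∑' j, P {ω | (2⁻¹ : ℝ) ^ j ≤ dist (X j ω) (X (j + 1) ω)} ≠ ∞ :=
    ne_top_of_le_ne_top (by simp [ENNReal.tsum_geometric]) (ENNReal.tsum_le_tsum hX)
  filter_upwards [ae_eventually_notMem hsum] with ω hω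
  refine cauchySeq_of_summable_dist <| .of_norm_bounded_eventually_nat
    (summable_geometric_of_lt_one (by norm_num) (by norm_num : (2⁻¹ : ℝ) < 1)) ?_
  filter_upwards [hω] with j hj
  simpa [abs_of_nonneg dist_nonneg] using (not_le.1 hj).le

lemma CauchyInMeasure.tendstoInMeasure_of_subseq (hZ : CauchyInMeasure P Z) {n : ℕ → ℕ}
    (hn : StrictMono n) {g : Ω → E} (hg : TendstoInMeasure P (fun j => Z (n j)) atTop g) :
    TendstoInMeasure P Z atTop g := by
  rw [tendstoInMeasure_iff_dist] at hg ⊢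
  intro δ hδ
  rw [ENNReal.tendsto_atTop_zero]
  intro ε hε
  obtain ⟨N, hN⟩ := hZ (δ / 2) (by positivity) (ε / 2) (ENNReal.half_pos hε.ne')
  obtain ⟨J, hJ⟩ := ENNReal.tendsto_atTop_zero.1 (hg (δ / 2) (by positivity)) (ε / 2)
    (ENNReal.half_pos hε.ne')
  refine ⟨N, fun p hp => ?_⟩
  have hnN : N ≤ n (max J N) := (le_max_right J N).trans hn.le_apply
  calc P {ω | δ ≤ dist (Z p ω) (g ω)}
      ≤ P {ω | δ / 2 ≤ dist (Z p ω) (Z (n (max J N)) ω)} +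
          P {ω | δ / 2 ≤ dist (Z (n (max J N)) ω) (g ω)} := measure_le_dist_le_add P _ _ _ δ
    _ ≤ ε / 2 + ε / 2 := add_le_add (hN p hp _ hnN) (hJ _ (le_max_left J N))
    _ = ε := ENNReal.add_halves ε

variable [MeasurableSpace E] [BorelSpace E] [SecondCountableTopology E] [CompleteSpace E]
  [IsFiniteMeasure P]

theorem CauchyInMeasure.exists_measurable_tendstoInMeasure (hZ : CauchyInMeasure P Z)
    (hZmeas : ∀ n, Measurable (Z n)) :
    ∃ g : Ω → E, Measurable g ∧ TendstoInMeasure P Z atTop g := by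
  obtain ⟨n, hn, hsucc⟩ := hZ.exists_strictMono_measure_dist_succ_le
  have hconv : ∀ᵐ ω ∂P, ∃ c, Tendsto (fun j => Z (n j) ω) atTop (𝓝 c) := by
    filter_upwards [ae_cauchySeq_of_measure_dist_succ_le hsucc] with ω hω
    exact cauchySeq_tendsto_of_complete hω
  obtain ⟨g, hgmeas, hg⟩ :=
    measurable_limit_of_tendsto_metrizable_ae (fun j => (hZmeas (n j)).aemeasurable) hconv
  exact ⟨g, hgmeas, hZ.tendstoInMeasure_of_subseq hn <|
    tendstoInMeasure_of_tendsto_ae (fun j => (hZmeas (n j)).aestronglyMeasurable) hg⟩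

end CauchyInMeasure

lemma exists_strictMono_comp_strictMono_pair {p q : ℕ → ℕ} (hp : ∀ n, n ≤ p n)
    (hq : ∀ n, n ≤ q n) : ∃ φ : ℕ → ℕ, StrictMono (p ∘ φ) ∧ StrictMono (q ∘ φ) := by
  obtain ⟨φ, hφ, hpφ⟩ := strictMono_subseq_of_id_le hp
  obtain ⟨ψ, hψ, hqψ⟩ := strictMono_subseq_of_tendsto_atTop
    (tendsto_atTop_mono (fun n => hq (φ n)) hφ.tendsto_atTop)
  exact ⟨φ ∘ ψ, hpφ.comp hψ, hqψ⟩

section TruncatedDist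

variable {E : Type*} [PseudoMetricSpace E]

noncomputable def truncatedDist (δ : ℝ) (hδ : 0 < δ) : E × E →ᵇ ℝ :=
  BoundedContinuousFunction.mkOfBound ⟨fun p => min (dist p.1 p.2 / δ) 1, by fun_prop⟩ 1
    fun _ _ => Real.dist_le_of_mem_Icc_01
      ⟨le_min (by positivity) zero_le_one, min_le_right _ _⟩
      ⟨le_min (by positivity) zero_le_one, min_le_right _ _⟩

variable {δ : ℝ} (hδ : 0 < δ)

lemma truncatedDist_nonneg (p : E × E) : 0 ≤ truncatedDist δ hδ p :=
  le_min (by positivity) zero_le_one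

lemma truncatedDist_eq_one {p : E × E} (hp : δ ≤ dist p.1 p.2) : truncatedDist δ hδ p = 1 :=
  min_eq_right ((one_le_div hδ).2 hp)

lemma truncatedDist_eq_zero {p : E × E} (hp : p.1 = p.2) : truncatedDist δ hδ p = 0 := by
  simp [truncatedDist, hp]

variable [MeasurableSpace E] [BorelSpace E] [SecondCountableTopology E]

lemma integral_truncatedDist_eq_zero [T2Space E] {μ : Measure (E × E)} [IsProbabilityMeasure μ]
    (hμ : μ {p | p.1 = p.2} = 1) : ∫ p, truncatedDist δ hδ p ∂μ = 0 := by
  have hdiag : ∀ᵐ p ∂μ, p.1 = p.2 := by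
    rw [ae_iff_measure_eq isClosed_diagonal.measurableSet.nullMeasurableSet, hμ, measure_univ]
  exact integral_eq_zero_of_ae (hdiag.mono fun p hp => truncatedDist_eq_zero hδ hp)

lemma measure_le_dist_le_ofReal_integral_truncatedDist {Ω : Type*} [MeasurableSpace Ω]
    (P : Measure Ω) [IsFiniteMeasure P] {X Y : Ω → E} (hX : Measurable X) (hY : Measurable Y) :
    P {ω | δ ≤ dist (X ω) (Y ω)} ≤ ENNReal.ofReal (∫ ω, truncatedDist δ hδ (X ω, Y ω) ∂P) := by
  have hint : Integrable (fun ω => truncatedDist δ hδ (X ω, Y ω)) P :=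
    .of_bound
      ((truncatedDist δ hδ).continuous.measurable.comp (hX.prodMk hY)).aestronglyMeasurable
      ‖truncatedDist δ hδ‖ (ae_of_all _ fun _ => BoundedContinuousFunction.norm_coe_le_norm _ _)
  have hmarkov := mul_meas_ge_le_integral_of_nonneg
    (ae_of_all _ fun ω => truncatedDist_nonneg hδ (X ω, Y ω)) hint 1
  rw [one_mul] at hmarkov
  calc P {ω | δ ≤ dist (X ω) (Y ω)}
      ≤ P {ω | 1 ≤ truncatedDist δ hδ (X ω, Y ω)} :=
        measure_mono fun ω hω => (truncatedDist_eq_one hδ hω).ge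
    _ = ENNReal.ofReal (P.real {ω | 1 ≤ truncatedDist δ hδ (X ω, Y ω)}) :=
        (ofReal_measureReal (measure_ne_top _ _)).symm
    _ ≤ _ := ENNReal.ofReal_le_ofReal hmarkov

theorem cauchyInMeasure_of_forall_subseq_law_pair_tendsto_diagonal [T2Space E]
    {Ω : Type*} [MeasurableSpace Ω] {P : Measure Ω} [IsFiniteMeasure P]
    {Z : ℕ → Ω → E} (hZmeas : ∀ n, Measurable (Z n))
    (h : ∀ l m : ℕ → ℕ, StrictMono l → StrictMono m →
      ∃ k : ℕ → ℕ, StrictMono k ∧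
        ∃ μ : Measure (E × E), IsProbabilityMeasure μ ∧
          μ {p : E × E | p.1 = p.2} = 1 ∧
          ∀ f : BoundedContinuousFunction (E × E) ℝ,
            Tendsto (fun r => ∫ ω, f (Z (l (k r)) ω, Z (m (k r)) ω) ∂P)
              atTop (𝓝 (∫ p, f p ∂μ))) :
    CauchyInMeasure P Z := by
  intro δ hδ ε hε
  by_contra! hfar
  choose p hp q hq hfar using hfar
  obtain ⟨φ, hpφ, hqφ⟩ := exists_strictMono_comp_strictMono_pair hp hq
  obtain ⟨k, -, μ, _, hμ, hconv⟩ := h _ _ hpφ hqφ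
  have hlim := ENNReal.tendsto_ofReal (hconv (truncatedDist δ hδ))
  rw [integral_truncatedDist_eq_zero hδ hμ, ENNReal.ofReal_zero] at hlim
  refine hε.not_ge (ge_of_tendsto' hlim fun r => (hfar (φ (k r))).le.trans ?_)
  exact measure_le_dist_le_ofReal_integral_truncatedDist hδ P (hZmeas _) (hZmeas _)

end TruncatedDist

theorem gyongy_krylov_criterion
    (E : Type) [MetricSpace E] [TopologicalSpace.SeparableSpace E] [CompleteSpace E]
    [MeasurableSpace E] [BorelSpace E]
    (Ω : Type) [MeasurableSpace Ω] (P : Measure Ω) [IsProbabilityMeasure P]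
    (Z : ℕ → Ω → E) (hZmeas : ∀ n, Measurable (Z n))
    (h : ∀ l m : ℕ → ℕ, StrictMono l → StrictMono m →
      ∃ k : ℕ → ℕ, StrictMono k ∧
        ∃ μ : Measure (E × E), IsProbabilityMeasure μ ∧
          μ {p : E × E | p.1 = p.2} = 1 ∧
          -- the laws of (Z_{l_{k_r}}, Z_{m_{k_r}}) converge weakly to μ
          ∀ f : BoundedContinuousFunction (E × E) ℝ,
            Tendsto (fun r => ∫ ω, f (Z (l (k r)) ω, Z (m (k r)) ω) ∂P)
              atTop (𝓝 (∫ p, f p ∂μ))) :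
    ∃ Zlim : Ω → E, Measurable Zlim ∧ TendstoInMeasure P Z atTop Zlim := by
  have := UniformSpace.secondCountable_of_separable E
  exact (cauchyInMeasure_of_forall_subseq_law_pair_tendsto_diagonal hZmeas h)
    |>.exists_measurable_tendstoInMeasure hZmeas
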